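/- Let ρ be a 3×3 density matrix and A a 3×3 Hermitian matrix with simple eigenvalues 1, 0, −1 and orthonormal eigenvectors |1⟩, |2⟩, |3⟩, and set p_j = ⟨j|ρ|j⟩. Then, with V(X) = Tr[ρX²] − (Tr[ρX])², one has p_1² + p_2² + p_3² = 1 − (1/2)·V(A) − (3/2)·V(A²). Equivalently, the collision entropy satisfies H₂(A) = −ln(p_1² + p_2² + p_3²) = −ln[1 − V(A)/2 − 3V(A²)/2]. -/

import Mathlib

/-!
With `P j` the rank-one projection onto `v j`, orthonormality makes `P 0` and `P 2` orthogonal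
idempotents, so `A = P 0 - P 2` has `A² = P 0 + P 2`, itself an idempotent, whence `A⁴ = A²`.
Since `Tr (ρ P j) = p j`, this gives `V(A) = (p₀ + p₂) - (p₀ - p₂)²` and
`V(A²) = (p₀ + p₂) - (p₀ + p₂)²`; completeness `∑ P j = 1` gives `p₀ + p₁ + p₂ = Tr ρ = 1`,
and eliminating `p₁` yields the identity.
-/

open Matrix ComplexOrder

theorem IsIdempotentElem.sub_mul_self_sub {R : Type*} [NonUnitalNonAssocRing R] {a b : R}
    (ha : IsIdempotentElem a) (hb : IsIdempotentElem b) (hab : a * b + b * a = 0) :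
    (a - b) * (a - b) = a + b := by
  rw [mul_sub, sub_mul, sub_mul, ha.eq, hb.eq, ← sub_zero (a + b), ← hab]
  abel

namespace Matrix

variable {l m n R : Type*}

theorem mul_eq_sum_vecMulVec [Fintype m] [NonUnitalNonAssocSemiring R]
    (M : Matrix l m R) (N : Matrix m n R) : M * N = ∑ j, vecMulVec (M.col j) (N.row j) := by
  ext i k
  simp [mul_apply, Matrix.sum_apply, vecMulVec_apply]

section Projection

variable [Fintype n] [Semiring R] [Star R] {u w : n → R}

theorem isIdempotentElem_vecMulVec_star (hu : star u ⬝ᵥ u = 1) :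
    IsIdempotentElem (vecMulVec u (star u)) := by
  rw [IsIdempotentElem, vecMulVec_mul_vecMulVec, hu, one_smul]

theorem vecMulVec_star_mul_vecMulVec_star_eq_zero (huw : star u ⬝ᵥ w = 0) :
    vecMulVec u (star u) * vecMulVec w (star w) = 0 := by
  rw [vecMulVec_mul_vecMulVec, huw, zero_smul]
  ext; simp [vecMulVec_apply]

end Projection

theorem trace_mul_vecMulVec_star [Fintype n] [CommSemiring R] [Star R]
    (ρ : Matrix n n R) (u : n → R) : (ρ * vecMulVec u (star u)).trace = star u ⬝ᵥ ρ *ᵥ u := by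
  rw [mul_vecMulVec, trace_vecMulVec, dotProduct_comm]

theorem sum_vecMulVec_star_eq_one [Fintype n] [DecidableEq n] [CommRing R] [StarRing R]
    {v : n → n → R} (hv : ∀ i j, star (v i) ⬝ᵥ v j = if i = j then 1 else 0) :
    ∑ j, vecMulVec (v j) (star (v j)) = 1 := by
  set M : Matrix n n R := (of v)ᵀ
  have hM : Mᴴ * M = 1 := by
    ext i j
    simpa [M, mul_apply, one_apply, dotProduct] using hv i j
  rw [← mul_eq_one_comm.mp hM, mul_eq_sum_vecMulVec]
  rfl

end Matrix

theorem spin1_collision_entropy_from_variances_general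
    (ρ A : Matrix (Fin 3) (Fin 3) ℂ)
    (hρtr : ρ.trace = 1)
    (v : Fin 3 → Fin 3 → ℂ)
    (hv : ∀ i j, star (v i) ⬝ᵥ v j = if i = j then 1 else 0)
    (hA : A = vecMulVec (v 0) (star (v 0)) - vecMulVec (v 2) (star (v 2)))
    (p : Fin 3 → ℝ)
    (hp : ∀ j, star (v j) ⬝ᵥ ρ *ᵥ v j = (p j : ℂ))
    (VA VA2 : ℝ)
    (hVA : (ρ * (A * A)).trace - ((ρ * A).trace) ^ 2 = (VA : ℂ))
    (hVA2 : (ρ * ((A * A) * (A * A))).trace - ((ρ * (A * A)).trace) ^ 2 = (VA2 : ℂ)) :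
    p 0 ^ 2 + p 1 ^ 2 + p 2 ^ 2 = 1 - VA / 2 - 3 * VA2 / 2 ∧
    -Real.log (p 0 ^ 2 + p 1 ^ 2 + p 2 ^ 2) =
      -Real.log (1 - VA / 2 - 3 * VA2 / 2) := by
  set P : Fin 3 → Matrix (Fin 3) (Fin 3) ℂ := fun j => vecMulVec (v j) (star (v j))
  have hP : ∀ j, IsIdempotentElem (P j) := fun j =>
    isIdempotentElem_vecMulVec_star (by simpa using hv j j)
  have hP02 : P 0 * P 2 + P 2 * P 0 = 0 := by
    rw [vecMulVec_star_mul_vecMulVec_star_eq_zero (by simpa using hv 0 2),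
      vecMulVec_star_mul_vecMulVec_star_eq_zero (by simpa using hv 2 0), add_zero]
  have hA2 : A * A = P 0 + P 2 := by rw [hA]; exact (hP 0).sub_mul_self_sub (hP 2) hP02
  have hA4 : A * A * (A * A) = A * A := by rw [hA2]; exact ((hP 0).add (hP 2) hP02).eq
  have htr : ∀ j, (ρ * P j).trace = p j := fun j => (trace_mul_vecMulVec_star ρ (v j)).trans (hp j)
  have hsum : (p 0 : ℂ) + p 1 + p 2 = 1 := by
    rw [← hρtr, ← mul_one ρ, ← sum_vecMulVec_star_eq_one hv, Finset.mul_sum, trace_sum,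
      Fin.sum_univ_three, htr, htr, htr]
  rw [hA4, hA2, mul_add, trace_add, htr, htr] at hVA2
  rw [hA2, hA, mul_add, mul_sub, trace_add, trace_sub, htr, htr] at hVA
  have hcollision : p 0 ^ 2 + p 1 ^ 2 + p 2 ^ 2 = 1 - VA / 2 - 3 * VA2 / 2 := by
    have : (p 0 ^ 2 + p 1 ^ 2 + p 2 ^ 2 : ℂ) = 1 - VA / 2 - 3 * VA2 / 2 := by
      linear_combination (↑(p 1) + 1 - ↑(p 0) - ↑(p 2)) * hsum - hVA / 2 - 3 * hVA2 / 2
    exact_mod_cast this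
  exact ⟨hcollision, by rw [hcollision]⟩

/-- Eq. (25): for a spin-1 observable `A` (simple eigenvalues `1, 0, −1`) in state `ρ`,
`Σ_j p_j² = 1 − V(A)/2 − 3V(A²)/2`, equivalently
`H₂(A) = −ln(Σ_j p_j²) = −ln[1 − V(A)/2 − 3V(A²)/2]`. -/
theorem spin1_collision_entropy_from_variances
    (ρ A : Matrix (Fin 3) (Fin 3) ℂ)
    (hρ : ρ.PosSemidef) (hρtr : ρ.trace = 1)
    (v : Fin 3 → Fin 3 → ℂ)
    (hv : ∀ i j, star (v i) ⬝ᵥ v j = if i = j then 1 else 0)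
    (hA : A = vecMulVec (v 0) (star (v 0)) - vecMulVec (v 2) (star (v 2)))
    (p : Fin 3 → ℝ)
    (hp : ∀ j, star (v j) ⬝ᵥ ρ *ᵥ v j = (p j : ℂ))
    (VA VA2 : ℝ)
    (hVA : (ρ * (A * A)).trace - ((ρ * A).trace) ^ 2 = (VA : ℂ))
    (hVA2 : (ρ * ((A * A) * (A * A))).trace - ((ρ * (A * A)).trace) ^ 2 = (VA2 : ℂ)) :
    p 0 ^ 2 + p 1 ^ 2 + p 2 ^ 2 = 1 - VA / 2 - 3 * VA2 / 2 ∧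
    -Real.log (p 0 ^ 2 + p 1 ^ 2 + p 2 ^ 2) =
      -Real.log (1 - VA / 2 - 3 * VA2 / 2) :=
  spin1_collision_entropy_from_variances_general ρ A hρtr v hv hA p hp VA VA2 hVA hVA2
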